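/- Let p be a prime and let (Λ_i)_{i≥1} be a sequence of full-rank ℤ_p-lattices in an n-dimensional ℚ_p-vector space such that (i) Λ_{i+1} ⊂ Λ_i, (ii) Λ_i/Λ_{i+1} ≅ ℤ/pℤ, and (iii) for every x ∈ Λ_i \ Λ_{i+1} one has px ∈ Λ_{i+1} \ Λ_{i+2}. Then for every i ≥ 1 the quotient group Λ_1/Λ_i is cyclic of order p^{i-1}, i.e. Λ_1/Λ_i ≅ ℤ/p^{i-1}ℤ. -/

import Mathlib

/-!
Pick `x ∈ Λ₁ \ Λ₂`. Condition (iii) propagates along the chain, so `p ^ k • x ∈ Λ_{k+1} \ Λ_{k+2}`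
for every `k`; hence the class of `x` in `Λ₁ / Λ_{j+1}` has additive order exactly `p ^ j`.
By (ii) and multiplicativity of the index in the chain, `Λ₁ / Λ_{j+1}` has order `p ^ j` as well,
so it is cyclic, generated by `x`.
-/

namespace AddSubgroup

variable {G : Type*} [AddCommGroup G] {p : ℕ} {H : ℕ → AddSubgroup G}

theorem relIndex_zero_eq_pow (hH : Antitone H) (hidx : ∀ k, (H (k + 1)).relIndex (H k) = p)
    (k : ℕ) : (H k).relIndex (H 0) = p ^ k := by
  induction k with
  | zero => simp
  | succ k ih =>
    rw [← relIndex_mul_relIndex _ _ _ (hH k.le_succ) (hH k.zero_le), hidx, ih, pow_succ']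

theorem pow_nsmul_mem_sdiff
    (hmul : ∀ k, ∀ x ∈ H k, x ∉ H (k + 1) → p • x ∈ H (k + 1) ∧ p • x ∉ H (k + 2))
    {x : G} (hx₀ : x ∈ H 0) (hx₁ : x ∉ H 1) (k : ℕ) :
    p ^ k • x ∈ H k ∧ p ^ k • x ∉ H (k + 1) := by
  induction k with
  | zero => simpa using ⟨hx₀, hx₁⟩
  | succ k ih =>
    rw [pow_succ', mul_nsmul']
    exact hmul k _ ih.1 ih.2

theorem addOrderOf_mk_eq_pow [Fact p.Prime]
    (hmul : ∀ k, ∀ x ∈ H k, x ∉ H (k + 1) → p • x ∈ H (k + 1) ∧ p • x ∉ H (k + 2))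
    {x : G} (hx₀ : x ∈ H 0) (hx₁ : x ∉ H 1) (j : ℕ) :
    addOrderOf (QuotientAddGroup.mk ⟨x, hx₀⟩ : H 0 ⧸ (H j).addSubgroupOf (H 0)) = p ^ j := by
  cases j with
  | zero => simp
  | succ j =>
    have hzero (m : ℕ) : m • (QuotientAddGroup.mk ⟨x, hx₀⟩ :
        H 0 ⧸ (H (j + 1)).addSubgroupOf (H 0)) = 0 ↔ m • x ∈ H (j + 1) := by
      rw [← QuotientAddGroup.mk_nsmul, QuotientAddGroup.eq_zero_iff, mem_addSubgroupOf,
        AddSubmonoidClass.coe_nsmul]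
    have hpow := pow_nsmul_mem_sdiff hmul hx₀ hx₁
    exact addOrderOf_eq_prime_pow (mt (hzero _).1 (hpow j).2) ((hzero _).2 (hpow (j + 1)).1)

theorem nonempty_quotient_addEquiv_zmod_pow [Fact p.Prime] (hH : Antitone H)
    (hidx : ∀ k, (H (k + 1)).relIndex (H k) = p)
    (hmul : ∀ k, ∀ x ∈ H k, x ∉ H (k + 1) → p • x ∈ H (k + 1) ∧ p • x ∉ H (k + 2)) (j : ℕ) :
    Nonempty (H 0 ⧸ (H j).addSubgroupOf (H 0) ≃+ ZMod (p ^ j)) := by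
  have hp : p.Prime := Fact.out
  obtain ⟨x, hx₀, hx₁⟩ : ∃ x ∈ H 0, x ∉ H 1 :=
    Set.not_subset.1 fun h ↦ hp.one_lt.ne' ((hidx 0).symm.trans (relIndex_eq_one.2 h))
  have hcard : Nat.card (H 0 ⧸ (H j).addSubgroupOf (H 0)) = p ^ j :=
    (index_eq_card _).symm.trans (relIndex_zero_eq_pow hH hidx j)
  have : Finite (H 0 ⧸ (H j).addSubgroupOf (H 0)) :=
    Nat.finite_of_card_ne_zero (hcard ▸ pow_ne_zero j hp.ne_zero)
  have hcyc := isAddCyclic_of_addOrderOf_eq_card _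
    ((addOrderOf_mk_eq_pow hmul hx₀ hx₁ j).trans hcard.symm)
  exact ⟨(zmodAddCyclicAddEquiv hcyc).symm.trans (ZMod.ringEquivCongr hcard).toAddEquiv⟩

end AddSubgroup

theorem lattice_chain_quotient_cyclic_general
    (p : ℕ) [Fact p.Prime]
    (V : Type) [AddCommGroup V] [Module ℤ_[p] V]
    (Λ : ℕ → Submodule ℤ_[p] V)
    (hsub : ∀ i, 1 ≤ i → Λ (i + 1) < Λ i)
    (hquot : ∀ i, 1 ≤ i →
      Nonempty ((↥(Λ i) ⧸ (Λ (i + 1)).comap (Λ i).subtype) ≃+ ZMod p))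
    (hmul : ∀ i, 1 ≤ i → ∀ x ∈ Λ i, x ∉ Λ (i + 1) →
      (p : ℤ_[p]) • x ∈ Λ (i + 1) ∧ (p : ℤ_[p]) • x ∉ Λ (i + 2)) :
    ∀ i, 1 ≤ i →
      Nonempty ((↥(Λ 1) ⧸ (Λ i).comap (Λ 1).subtype) ≃+ ZMod (p ^ (i - 1))) := by
  intro i hi
  obtain ⟨j, rfl⟩ : ∃ j, i = j + 1 := ⟨i - 1, by omega⟩
  let H : ℕ → AddSubgroup V := fun k ↦ (Λ (k + 1)).toAddSubgroup
  have hH : Antitone H :=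
    antitone_nat_of_succ_le fun k ↦ Submodule.toAddSubgroup_mono (hsub (k + 1) k.succ_pos).le
  have hidx (k : ℕ) : (H (k + 1)).relIndex (H k) = p := by
    obtain ⟨e⟩ := hquot (k + 1) k.succ_pos
    exact (Nat.card_congr e.toEquiv).trans (Nat.card_zmod p)
  have hmul' (k : ℕ) (x : V) : x ∈ H k → x ∉ H (k + 1) → p • x ∈ H (k + 1) ∧ p • x ∉ H (k + 2) := by
    rw [← Nat.cast_smul_eq_nsmul ℤ_[p]]
    exact hmul (k + 1) k.succ_pos x
  exact AddSubgroup.nonempty_quotient_addEquiv_zmod_pow hH hidx hmul' j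

theorem lattice_chain_quotient_cyclic
    (p : ℕ) [Fact p.Prime] (n : ℕ)
    (V : Type) [AddCommGroup V] [Module ℚ_[p] V] [Module ℤ_[p] V]
    [IsScalarTower ℤ_[p] ℚ_[p] V]
    (hdim : Module.finrank ℚ_[p] V = n)
    (Λ : ℕ → Submodule ℤ_[p] V)
    (hfree : ∀ i, 1 ≤ i → Module.Free ℤ_[p] (Λ i))
    (hrank : ∀ i, 1 ≤ i → Module.finrank ℤ_[p] (Λ i) = n)
    (hsub : ∀ i, 1 ≤ i → Λ (i + 1) < Λ i)
    (hquot : ∀ i, 1 ≤ i →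
      Nonempty ((↥(Λ i) ⧸ (Λ (i + 1)).comap (Λ i).subtype) ≃+ ZMod p))
    (hmul : ∀ i, 1 ≤ i → ∀ x ∈ Λ i, x ∉ Λ (i + 1) →
      (p : ℤ_[p]) • x ∈ Λ (i + 1) ∧ (p : ℤ_[p]) • x ∉ Λ (i + 2)) :
    ∀ i, 1 ≤ i →
      Nonempty ((↥(Λ 1) ⧸ (Λ i).comap (Λ 1).subtype) ≃+ ZMod (p ^ (i - 1))) :=
  lattice_chain_quotient_cyclic_general p V Λ hsub hquot hmul
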